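/- Let p, q > 0 and r ∈ (0,4). Define t_0 = 1, t_k = (p + sqrt(q + r·t_{k-1}²))/2 and a_k = (t_{k-1} - 1)/t_k. Then a_k converges to 1 - (4 - r)/(2p + Δ), where Δ = sqrt(r·p² + (4-r)·q). -/

import Mathlib

/-!
The recursion is `t_{k+1} = f(t_k)` with `f x = (p + √(q + r x²)) / 2`. Since
`x ↦ √(q + r x²)` is `√r`-Lipschitz, `f` is a contraction of `ℝ` with constant `√r / 2 < 1`,
so `t_k` converges to the unique fixed point of `f`. Solving `√(q + r T²) = 2T - p` gives
`T = (2p + Δ) / (4 - r)`, and then `a_k → (T - 1) / T = 1 - (4 - r) / (2p + Δ)`.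
-/

open Filter Topology Function

theorem sqrt_add_mul_sq_le {q r : ℝ} (hq : 0 ≤ q) (hr : 0 ≤ r) (x y : ℝ) :
    √(q + r * x ^ 2) ≤ √(q + r * y ^ 2) + √r * |x - y| := by
  have hy : √r * |y| ≤ √(q + r * y ^ 2) := by
    rw [← Real.sqrt_sq_eq_abs, ← Real.sqrt_mul hr]
    exact Real.sqrt_le_sqrt (by linarith)
  rw [Real.sqrt_le_left (by positivity), add_sq, Real.sq_sqrt (by positivity), mul_pow,
    Real.sq_sqrt hr, sq_abs]
  -- `r x² - r y² - r (x - y)² = 2 r y (x - y)`, and `|r y| ≤ √r · √(q + r y²)`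
  nlinarith [mul_le_mul_of_nonneg_left hy (mul_nonneg (Real.sqrt_nonneg r) (abs_nonneg (x - y))),
    Real.sq_sqrt hr, abs_mul_abs_self y, abs_mul y (x - y), le_abs_self (y * (x - y))]

theorem abs_sqrt_add_mul_sq_sub_le {q r : ℝ} (hq : 0 ≤ q) (hr : 0 ≤ r) (x y : ℝ) :
    |√(q + r * x ^ 2) - √(q + r * y ^ 2)| ≤ √r * |x - y| :=
  abs_sub_le_iff.2 ⟨by linarith [sqrt_add_mul_sq_le hq hr x y],
    by linarith [abs_sub_comm x y ▸ sqrt_add_mul_sq_le hq hr y x]⟩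

noncomputable def fistaStep (p q r x : ℝ) : ℝ := (p + √(q + r * x ^ 2)) / 2

section

variable {p q r : ℝ}

theorem contractingWith_fistaStep (hq : 0 ≤ q) (hr0 : 0 ≤ r) (hr4 : r < 4) :
    ContractingWith (√r / 2).toNNReal (fistaStep p q r) := by
  refine ⟨Real.toNNReal_lt_one.2 ?_, LipschitzWith.of_dist_le' fun x y => ?_⟩
  · have : √r < 2 := (Real.sqrt_lt' two_pos).2 (by linarith)
    linarith
  · have := abs_sqrt_add_mul_sq_sub_le hq hr0 x y
    rw [Real.dist_eq, Real.dist_eq, fistaStep, fistaStep,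
      show ∀ u v : ℝ, (p + u) / 2 - (p + v) / 2 = (u - v) / 2 by intros; ring, abs_div, abs_two]
    linarith

theorem isFixedPt_fistaStep (hp : 0 ≤ p) (hq : 0 ≤ q) (hr0 : 0 ≤ r) (hr4 : r < 4) :
    IsFixedPt (fistaStep p q r) ((2 * p + √(r * p ^ 2 + (4 - r) * q)) / (4 - r)) := by
  set D := √(r * p ^ 2 + (4 - r) * q)
  have hD : D ^ 2 = r * p ^ 2 + (4 - r) * q := Real.sq_sqrt (by positivity)
  have h4r : 0 < 4 - r := by linarith
  set T := (2 * p + D) / (4 - r)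
  have hroot : 2 * T - p = (r * p + 2 * D) / (4 - r) := by
    unfold T; field_simp; ring
  have hsq : q + r * T ^ 2 = (2 * T - p) ^ 2 := by
    rw [hroot]; unfold T; field_simp; linear_combination (r - 4) * hD
  have hsqrt : √(q + r * T ^ 2) = 2 * T - p := by
    rw [hsq, Real.sqrt_sq (by rw [hroot]; positivity)]
  rw [IsFixedPt, fistaStep, hsqrt]
  ring

theorem tendsto_iterate_fistaStep (hp : 0 ≤ p) (hq : 0 ≤ q) (hr0 : 0 ≤ r) (hr4 : r < 4)
    (x : ℝ) :
    Tendsto (fun k => (fistaStep p q r)^[k] x) atTop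
      (𝓝 ((2 * p + √(r * p ^ 2 + (4 - r) * q)) / (4 - r))) := by
  have hf : ContractingWith _ (fistaStep p q r) := contractingWith_fistaStep hq hr0 hr4
  rw [hf.fixedPoint_unique (isFixedPt_fistaStep hp hq hr0 hr4)]
  exact hf.tendsto_iterate_fixedPoint x

end

theorem fista_a_limit_r_lt_four (p q r : ℝ) (hp : 0 < p) (hq : 0 < q)
    (hr0 : 0 < r) (hr4 : r < 4) (t a : ℕ → ℝ) (ht0 : t 0 = 1)
    (hrec : ∀ k, t (k + 1) = (p + Real.sqrt (q + r * (t k) ^ 2)) / 2)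
    (ha : ∀ k, a (k + 1) = (t k - 1) / t (k + 1)) :
    Filter.Tendsto a Filter.atTop
      (nhds (1 - (4 - r) / (2 * p + Real.sqrt (r * p ^ 2 + (4 - r) * q)))) := by
  set T := (2 * p + √(r * p ^ 2 + (4 - r) * q)) / (4 - r)
  have h4r : 0 < 4 - r := by linarith
  have hT : 0 < T := by positivity
  have ht : t = fun k => (fistaStep p q r)^[k] 1 := by
    funext k
    induction k with
    | zero => exact ht0
    | succ k ih => rw [iterate_succ_apply', ← ih, hrec, fistaStep]
  have htT : Tendsto t atTop (𝓝 T) := ht ▸ tendsto_iterate_fistaStep hp.le hq.le hr0.le hr4 1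
  have hlim : Tendsto (fun k => a (k + 1)) atTop (𝓝 ((T - 1) / T)) := by
    simp_rw [ha]
    exact (htT.sub_const 1).div (htT.comp (tendsto_add_atTop_nat 1)) hT.ne'
  rw [sub_div, div_self hT.ne', one_div_div] at hlim
  exact (tendsto_add_atTop_iff_nat 1).mp hlim
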